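/- arXiv:2602.02169 — 3 statements merged into one kernel-verified Lean document; each statement's English description precedes it below -/
import Mathlib

section
/- Let 0 < α < 1, p ∈ [0,1], and let s be a complex number with positive real part, ξ ∈ ℝ. Then p(s - iξ)^α + (1-p)(s + iξ)^α ≠ 0, where z^α = exp(α Log z) with the principal logarithm. -/
/-! For `0 < re z` and `|α| ≤ 1` the power `z ^ α` has argument `α arg z ∈ (-π/2, π/2)`, so both
powers lie in the open right half-plane; that half-plane is convex, so the combination has
positive real part. -/

open Complex

lemma Complex.re_cpow_ofReal_pos {α : ℝ} (hα : |α| ≤ 1) {z : ℂ} (hz : 0 < z.re) :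
    0 < (z ^ (α : ℂ)).re := by
  have hz0 : z ≠ 0 := fun h => by simp [h] at hz
  have harg : |arg z * α| < Real.pi / 2 :=
    calc |arg z * α| = |arg z| * |α| := abs_mul _ _
      _ ≤ |arg z| := mul_le_of_le_one_right (abs_nonneg _) hα
      _ < Real.pi / 2 := abs_arg_lt_pi_div_two_iff.mpr (Or.inl hz)
  rw [cpow_ofReal_re]
  have hcos : 0 < Real.cos (arg z * α) := Real.cos_pos_of_mem_Ioo (abs_lt.mp harg)
  have hnorm : 0 < ‖z‖ := norm_pos_iff.mpr hz0
  positivity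

lemma Complex.re_convex_combination_pos {a b : ℂ} (ha : 0 < a.re) (hb : 0 < b.re) {p : ℝ}
    (hp0 : 0 ≤ p) (hp1 : p ≤ 1) : 0 < ((p : ℂ) * a + (1 - (p : ℂ)) * b).re := by
  have hmem := convex_halfSpace_re_gt (0 : ℝ) ha hb hp0 (sub_nonneg.mpr hp1) (by ring)
  simpa only [Set.mem_ofPred_eq, Complex.real_smul, ofReal_sub, ofReal_one] using hmem

theorem symbol_nonvanishing (α : ℝ) (hα0 : 0 < α) (hα1 : α < 1)
    (p : ℝ) (hp0 : 0 ≤ p) (hp1 : p ≤ 1) (s : ℂ) (hs : 0 < s.re) (ξ : ℝ) :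
    (p : ℂ) * (s - ξ * Complex.I) ^ (α : ℂ) +
      (1 - (p : ℂ)) * (s + ξ * Complex.I) ^ (α : ℂ) ≠ 0 := by
  have hα : |α| ≤ 1 := abs_le.mpr ⟨by linarith, hα1.le⟩
  have hminus : 0 < (s - ξ * I).re := by simpa using hs
  have hplus : 0 < (s + ξ * I).re := by simpa using hs
  have hre := re_convex_combination_pos (re_cpow_ofReal_pos hα hminus)
    (re_cpow_ofReal_pos hα hplus) hp0 hp1
  exact fun h => hre.ne' (by rw [h, zero_re])
end

section
/- Let 0 < α < 1, T > 0, C ≥ 0, and let (aₙ) be a nonnegative sequence of reals with a₀ = 0 satisfying aₙ ≤ ∑_{j=0}^{n-1} (b_{n-j} - b_{n-j+1}) a_j + C b_{n+1}^{-1} · c for all n ≥ 1, where b_k = k^{1-α} - (k-1)^{1-α} and c ≥ 0. Then max_{0 ≤ j ≤ n} a_j ≤ (C/b_{n+1}) c for all n. -/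
open Set

/-- The argmax `j ≤ n` of `a` satisfies `c j * a j ≤ K`, and `c j ≥ c n`. -/
theorem partialSups_le_div_of_le_one_sub_mul {ι 𝕜 : Type*} [Preorder ι] [LocallyFiniteOrderBot ι]
    [Field 𝕜] [LinearOrder 𝕜] [IsStrictOrderedRing 𝕜] {a c : ι → 𝕜} {K : 𝕜} (hK : 0 ≤ K)
    (hc_pos : ∀ i, 0 < c i) (hc : Antitone c)
    (h : ∀ i, a i ≤ (1 - c i) * partialSups a i + K) (n : ι) :
    partialSups a n ≤ K / c n := by
  obtain ⟨j, hjn, hmax⟩ := exists_partialSups_eq a n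
  have hsup_j : partialSups a j = a j :=
    le_antisymm ((partialSups_monotone a hjn).trans_eq hmax) (le_partialSups a j)
  have hj : c j * a j ≤ K := by linarith [hsup_j ▸ h j]
  calc partialSups a n = a j := hmax
    _ ≤ K / c j := (le_div_iff₀' (hc_pos j)).2 hj
    _ ≤ K / c n := div_le_div_of_nonneg_left hK (hc_pos n) (hc hjn)

theorem ConcaveOn.antitone_natCast_add_one_sub {f : ℝ → ℝ} (hf : ConcaveOn ℝ (Ici 0) f) :
    Antitone fun k : ℕ => f (k + 1) - f k :=
  antitone_nat_of_succ_le fun k => by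
    have := hf.slope_anti_adjacent (x := k) (y := k + 1) (z := k + 1 + 1)
      (mem_Ici.2 k.cast_nonneg) (mem_Ici.2 (by positivity)) (by linarith) (by linarith)
    simpa using this

namespace FracStability

theorem discrete_gronwall (α : ℝ) (hα0 : 0 < α) (hα1 : α < 1)
    (b : ℕ → ℝ) (hb : ∀ k, b k = (k : ℝ) ^ (1 - α) - ((k : ℝ) - 1) ^ (1 - α))
    (a : ℕ → ℝ) (ha0 : a 0 = 0) (K : ℝ) (hK : 0 ≤ K)
    (M : ℕ → ℝ) (hM : ∀ n, M n = (Finset.range (n + 1)).sup' (by simp) a)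
    (hrec : ∀ n, 1 ≤ n → a n ≤ (1 - b (n + 1)) * M n + K) :
    ∀ n, M n ≤ K / b (n + 1) := by
  have hM' : ∀ n, M n = partialSups a n := fun n => by rw [hM, partialSups_eq_sup'_range]
  have hb_succ : ∀ k : ℕ, b (k + 1) = ((k : ℝ) + 1) ^ (1 - α) - (k : ℝ) ^ (1 - α) := fun k => by
    rw [hb, Nat.cast_succ, add_sub_cancel_right]
  have hb_pos : ∀ k : ℕ, 0 < b (k + 1) := fun k => by
    rw [hb_succ, sub_pos]
    exact Real.rpow_lt_rpow k.cast_nonneg (lt_add_one _) (by linarith)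
  have hb_anti : Antitone fun k => b (k + 1) := by
    simpa only [hb_succ] using
      (Real.concaveOn_rpow (p := 1 - α) (by linarith) (by linarith)).antitone_natCast_add_one_sub
  have hrec' : ∀ n, a n ≤ (1 - b (n + 1)) * partialSups a n + K := by
    rintro (_ | n)
    · simp [ha0, hK]
    · rw [← hM']
      exact hrec _ n.succ_pos
  intro n
  rw [hM']
  exact partialSups_le_div_of_le_one_sub_mul hK hb_pos hb_anti hrec' n

end FracStability
end

section
/- Let 0 < α < 1 and let (uⁿ) be a sequence of nonnegative summable functions on ℤ (scaled by h > 0) satisfying ‖uⁿ‖₁ = ∑_{j=1}^{n-1}(b_{n-j}-b_{n-j+1})‖u^j‖₁ + (b_n - b_{n+1}) + (1-α)(n+1)^{-α} + h^α Γ(2-α) ρ, with ‖u⁰‖₁ = 1, b_k = k^{1-α}-(k-1)^{1-α}, and ρ ≥ 0. Then ‖uⁿ‖₁ ≤ 1 + n h^α Γ(2-α) ρ for all n ≥ 1. -/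
/-!
Write `C = h ^ α Γ(2 - α) ρ`. Concavity of `t ↦ t ^ (1 - α)` makes `b` decrease from `b 1 = 1`
to values in `[0, 1]`, so the weights `b (n - j) - b (n - j + 1)` are nonnegative, and they
telescope to `1 - b n`. The tangent-line bound `(1 - α) (n + 1) ^ (-α) ≤ b (n + 1)` then gives
`N n ≤ (1 - b n) (1 + (n - 1) C) + b n + C ≤ 1 + n C` by strong induction on `n`.
-/

open Finset

lemma rpow_add_one_sub_rpow_le {p x : ℝ} (hp0 : 0 ≤ p) (hp1 : p ≤ 1) (hx : 1 ≤ x) :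
    (x + 1) ^ p - x ^ p ≤ x ^ p - (x - 1) ^ p := by
  have := (Real.concaveOn_rpow hp0 hp1).slope_anti_adjacent (x := x - 1) (y := x) (z := x + 1)
    (by simp; linarith) (by simp; linarith) (by linarith) (by linarith)
  simpa using this

/-- Weighted AM-GM `x ^ (1 - α) (x + 1) ^ α ≤ x + α`, divided by `(x + 1) ^ α`. -/
lemma one_sub_div_rpow_le_rpow_sub_rpow {α x : ℝ} (hα0 : 0 ≤ α) (hα1 : α ≤ 1) (hx : 0 ≤ x) :
    (1 - α) / (x + 1) ^ α ≤ (x + 1) ^ (1 - α) - x ^ (1 - α) := by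
  have hx1 : 0 < x + 1 := by linarith
  have amgm : x ^ (1 - α) * (x + 1) ^ α ≤ (1 - α) * x + α * (x + 1) :=
    Real.geom_mean_le_arith_mean2_weighted (by linarith) hα0 hx hx1.le (by ring)
  rw [div_le_iff₀ (Real.rpow_pos_of_pos hx1 α), sub_mul, ← Real.rpow_add hx1,
    sub_add_cancel, Real.rpow_one]
  linarith

lemma rpow_sub_rpow_sub_one_nonneg {p : ℝ} (hp : 0 ≤ p) {k : ℕ} (hk : 1 ≤ k) :
    0 ≤ (k : ℝ) ^ p - ((k : ℝ) - 1) ^ p := by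
  have hk' : (1 : ℝ) ≤ k := by exact_mod_cast hk
  exact sub_nonneg.mpr (Real.rpow_le_rpow (by linarith) (by linarith) hp)

lemma sum_Ico_reflect_sub {M : Type*} [AddCommGroup M] (b : ℕ → M) {n : ℕ} (hn : 1 ≤ n) :
    ∑ j ∈ Ico 1 n, (b (n - j) - b (n - j + 1)) = b 1 - b n := by
  rw [sum_Ico_reflect (fun k => b k - b (k + 1)) 1 n.le_succ, Nat.add_sub_cancel_left,
    Nat.add_sub_cancel, ← neg_sub, ← sum_Ico_sub b hn, ← sum_neg_distrib]
  simp only [neg_sub]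

theorem le_one_add_mul_of_le_sum_diff_mul {b N : ℕ → ℝ} {C : ℝ} (hC : 0 ≤ C) (hb1 : b 1 = 1)
    (hb_succ : ∀ k ≥ 1, b (k + 1) ≤ b k) (hb_nonneg : ∀ k ≥ 1, 0 ≤ b k)
    (hN : ∀ n ≥ 1, N n ≤ ∑ j ∈ Ico 1 n, (b (n - j) - b (n - j + 1)) * N j + b n + C) :
    ∀ n ≥ 1, N n ≤ 1 + n * C := by
  intro n
  induction n using Nat.strong_induction_on with
  | _ n ih =>
    intro hn
    have hsum :
        ∑ j ∈ Ico 1 n, (b (n - j) - b (n - j + 1)) * N j ≤ (1 - b n) * (1 + (n - 1) * C) :=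
      calc ∑ j ∈ Ico 1 n, (b (n - j) - b (n - j + 1)) * N j
          ≤ ∑ j ∈ Ico 1 n, (b (n - j) - b (n - j + 1)) * (1 + (n - 1) * C) := by
            refine sum_le_sum fun j hj => ?_
            obtain ⟨hj1, hjn⟩ := mem_Ico.mp hj
            have hjn' : (j : ℝ) ≤ n - 1 := by
              rw [le_sub_iff_add_le]; exact_mod_cast hjn
            gcongr
            · exact sub_nonneg.mpr (hb_succ _ (by omega))
            · exact (ih j hjn hj1).trans (by gcongr)
        _ = (1 - b n) * (1 + (n - 1) * C) := by rw [← sum_mul, sum_Ico_reflect_sub b hn, hb1]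
    have hbn_le : b n ≤ 1 := hb1 ▸ antitoneOn_nat_Ici_of_succ_le hb_succ (le_refl 1) hn hn
    have hbn := hb_nonneg n hn
    have hn1 : (1 : ℝ) ≤ n := by exact_mod_cast hn
    nlinarith [hN n hn, mul_nonneg (mul_nonneg hbn (sub_nonneg.mpr hn1)) hC]

theorem discrete_probability_conservation_general (α h ρ : ℝ) (hα0 : 0 < α) (hα1 : α < 1)
    (hh : 0 < h) (hρ : 0 ≤ ρ)
    (b : ℕ → ℝ) (hb : ∀ k, b k = (k : ℝ) ^ (1 - α) - ((k : ℝ) - 1) ^ (1 - α))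
    (N : ℕ → ℝ)
    (hrec : ∀ n, 1 ≤ n →
      N n = (∑ j ∈ Finset.Ico 1 n, (b (n - j) - b (n - j + 1)) * N j) +
        (b n - b (n + 1)) + (1 - α) / ((n : ℝ) + 1) ^ α +
        h ^ α * Real.Gamma (2 - α) * ρ) :
    ∀ n, 1 ≤ n → N n ≤ 1 + (n : ℝ) * h ^ α * Real.Gamma (2 - α) * ρ := by
  have hC : 0 ≤ h ^ α * Real.Gamma (2 - α) * ρ := by
    have := Real.Gamma_pos_of_pos (show 0 < 2 - α by linarith)
    positivity
  have hb1 : b 1 = 1 := by simp [hb, Real.zero_rpow (show 1 - α ≠ 0 by linarith)]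
  have hb_succ : ∀ k ≥ 1, b (k + 1) ≤ b k := fun k hk => by
    simpa [hb] using rpow_add_one_sub_rpow_le (by linarith) (by linarith)
      (show (1 : ℝ) ≤ k by exact_mod_cast hk)
  have hb_lower : ∀ n : ℕ, (1 - α) / ((n : ℝ) + 1) ^ α ≤ b (n + 1) := fun n => by
    simpa [hb] using one_sub_div_rpow_le_rpow_sub_rpow hα0.le hα1.le n.cast_nonneg
  intro n hn
  simpa only [mul_assoc] using le_one_add_mul_of_le_sum_diff_mul hC hb1 hb_succ
    (fun k hk => hb k ▸ rpow_sub_rpow_sub_one_nonneg (by linarith) hk)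
    (fun n hn => by linarith [hrec n hn, hb_lower n]) n hn

theorem discrete_probability_conservation (α h ρ : ℝ) (hα0 : 0 < α) (hα1 : α < 1)
    (hh : 0 < h) (hρ : 0 ≤ ρ)
    (b : ℕ → ℝ) (hb : ∀ k, b k = (k : ℝ) ^ (1 - α) - ((k : ℝ) - 1) ^ (1 - α))
    (N : ℕ → ℝ) (hN : ∀ n, 0 ≤ N n) (hN0 : N 0 = 1)
    (hrec : ∀ n, 1 ≤ n →
      N n = (∑ j ∈ Finset.Ico 1 n, (b (n - j) - b (n - j + 1)) * N j) +
        (b n - b (n + 1)) + (1 - α) / ((n : ℝ) + 1) ^ α +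
        h ^ α * Real.Gamma (2 - α) * ρ) :
    ∀ n, 1 ≤ n → N n ≤ 1 + (n : ℝ) * h ^ α * Real.Gamma (2 - α) * ρ :=
  discrete_probability_conservation_general α h ρ hα0 hα1 hh hρ b hb N hrec
end
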